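/- arXiv:2403.02004 — 3 statements merged into one kernel-verified Lean document; each statement's English description precedes it below -/
import Mathlib

section
/- If a differentiable function f : ℝ^d → ℝ attains its infimum f_* on a nonempty closed set O_* and satisfies the Polyak–Łojasiewicz inequality 2λ(f(θ) − f_*) ≤ ‖∇f(θ)‖² with constant λ > 0, and additionally ∇f is L-Lipschitz, then f satisfies the quadratic growth condition 2(f(θ) − f_*) ≥ λ dist(θ, O_*)² for all θ ∈ ℝ^d. -/
/-!
Ekeland's variational principle applied to `g = √(f - f_*)` with a constant `ε` produces a point
`y` with `ε ‖y - θ‖ ≤ g θ - g y` at which `g` has slope at most `ε`. Away from the minimizers the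
PŁ inequality says precisely that `‖∇g‖ ≥ √(λ / 2)`, so for `ε < √(λ / 2)` the point `y` is a
minimizer, and `dist(θ, O_*) ≤ g θ / ε`. Letting `ε ↑ √(λ / 2)` gives the quadratic growth bound.
-/

open Filter Metric

section Slope

variable {E : Type*} [NormedAddCommGroup E] [NormedSpace ℝ E] {h : E → ℝ} {h' : StrongDual ℝ E}
  {y : E} {ε : ℝ}

theorem HasFDerivAt.neg_mul_norm_le_of_forall_le_add_norm_sub (hh : HasFDerivAt h h' y)
    (hy : ∀ z, h y ≤ h z + ε * ‖z - y‖) (v : E) : -(ε * ‖v‖) ≤ h' v := by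
  refine ge_of_tendsto (hh.lim v (c := id) tendsto_abs_atTop_atTop) ?_
  filter_upwards [eventually_gt_atTop 0] with t ht
  have hstep := hy (y + t⁻¹ • v)
  rw [add_sub_cancel_left, norm_smul, Real.norm_of_nonneg (inv_nonneg.2 ht.le)] at hstep
  have hscale : -(ε * ‖v‖) = t * -(ε * (t⁻¹ * ‖v‖)) := by field_simp
  rw [id, smul_eq_mul, hscale]
  exact mul_le_mul_of_nonneg_left (by linarith) ht.le

theorem HasFDerivAt.norm_le_of_forall_le_add_norm_sub (hh : HasFDerivAt h h' y) (hε : 0 ≤ ε)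
    (hy : ∀ z, h y ≤ h z + ε * ‖z - y‖) : ‖h'‖ ≤ ε := by
  refine h'.opNorm_le_bound hε fun v => abs_le.2 ⟨?_, ?_⟩
  · exact hh.neg_mul_norm_le_of_forall_le_add_norm_sub hy v
  · simpa using hh.neg_mul_norm_le_of_forall_le_add_norm_sub hy (-v)

end Slope

/-- Ekeland's variational principle, witnessed in a proper space by a minimizer of
`g + ε * dist · x`. -/
theorem Continuous.exists_le_add_mul_dist_of_bddBelow {X : Type*} [PseudoMetricSpace X]
    [ProperSpace X] {g : X → ℝ} (hg : Continuous g) (hbdd : BddBelow (Set.range g)) {ε : ℝ} (hε : 0 < ε)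
    (x : X) : ∃ y, g y + ε * dist y x ≤ g x ∧ ∀ z, g y ≤ g z + ε * dist z y := by
  obtain ⟨b, hb⟩ := hbdd
  have hcoercive : Tendsto (fun z => g z + ε * dist z x) (cocompact X) atTop :=
    tendsto_atTop_add_left_of_le' _ b (Eventually.of_forall fun z => hb ⟨z, rfl⟩)
      ((tendsto_dist_right_cocompact_atTop x).const_mul_atTop hε)
  have hcont : Continuous fun z => g z + ε * dist z x := by fun_prop
  obtain ⟨y, hy⟩ := hcont.exists_forall_le' x (hcoercive.eventually (eventually_ge_atTop _))
  refine ⟨y, by simpa using hy x, fun z => ?_⟩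
  have := mul_le_mul_of_nonneg_left (dist_triangle z y x) hε.le
  linarith [hy z]

section PolyakLojasiewicz

variable {E : Type*} [NormedAddCommGroup E] [InnerProductSpace ℝ E] [ProperSpace E] {f : E → ℝ}
  {fstar lam : ℝ}

theorem mul_infDist_le_sqrt_of_polyakLojasiewicz (hf : Differentiable ℝ f)
    (hinf : ∀ θ, fstar ≤ f θ) (hPL : ∀ θ, 2 * lam * (f θ - fstar) ≤ ‖gradient f θ‖ ^ 2)
    {ε : ℝ} (hε : 0 < ε) (hεlam : 2 * ε ^ 2 < lam) (θ : E) :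
    ε * infDist θ {x | f x = fstar} ≤ √(f θ - fstar) := by
  have hg : Continuous fun x => √(f x - fstar) := (hf.continuous.sub continuous_const).sqrt
  obtain ⟨y, hyθ, hy⟩ := hg.exists_le_add_mul_dist_of_bddBelow
    ⟨0, Set.forall_mem_range.2 fun _ => Real.sqrt_nonneg _⟩ hε θ
  have hfy : f y = fstar := by
    by_contra hne
    have hpos : 0 < f y - fstar := sub_pos.2 <| (hinf y).lt_of_ne' hne
    have hsqrt : 0 < √(f y - fstar) := Real.sqrt_pos.2 hpos
    have hderiv := ((hf y).hasFDerivAt.sub_const fstar).sqrt hpos.ne'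
    have hslope := hderiv.norm_le_of_forall_le_add_norm_sub hε.le
      (by simpa only [dist_eq_norm] using hy)
    rw [norm_smul, Real.norm_eq_abs, abs_of_pos (by positivity), one_div,
      inv_mul_le_iff₀ (by positivity)] at hslope
    have hgrad : ‖gradient f y‖ ≤ 2 * ε * √(f y - fstar) := by
      rw [gradient, LinearIsometryEquiv.norm_map]
      linarith
    have hgrad_sq := pow_le_pow_left₀ (norm_nonneg _) hgrad 2
    rw [mul_pow, Real.sq_sqrt hpos.le] at hgrad_sq
    nlinarith [hPL y]
  calc ε * infDist θ {x | f x = fstar} ≤ ε * dist y θ := by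
        rw [dist_comm]; exact mul_le_mul_of_nonneg_left (infDist_le_dist_of_mem hfy) hε.le
    _ ≤ √(f θ - fstar) := by linarith [Real.sqrt_nonneg (f y - fstar)]

theorem mul_infDist_sq_le_of_polyakLojasiewicz (hf : Differentiable ℝ f)
    (hinf : ∀ θ, fstar ≤ f θ) (hPL : ∀ θ, 2 * lam * (f θ - fstar) ≤ ‖gradient f θ‖ ^ 2) (θ : E) :
    lam * infDist θ {x | f x = fstar} ^ 2 ≤ 2 * (f θ - fstar) := by
  set D := infDist θ {x | f x = fstar}
  have hbelow : ∀ μ < lam, μ * D ^ 2 ≤ 2 * (f θ - fstar) := by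
    intro μ hμ
    rcases le_or_gt μ 0 with hμ0 | hμ0
    · nlinarith [sq_nonneg D, hinf θ]
    have hε : √(μ / 2) ^ 2 = μ / 2 := Real.sq_sqrt (by positivity)
    have hdist := mul_infDist_le_sqrt_of_polyakLojasiewicz (ε := √(μ / 2)) hf hinf hPL
      (by positivity) (by linarith) θ
    have hdist_sq := pow_le_pow_left₀ (mul_nonneg (Real.sqrt_nonneg _) infDist_nonneg) hdist 2
    rw [mul_pow, hε, Real.sq_sqrt (sub_nonneg.2 (hinf θ))] at hdist_sq
    linarith
  exact le_of_tendsto ((continuous_id.mul continuous_const).tendsto lam |>.mono_left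
    nhdsWithin_le_nhds) (eventually_nhdsWithin_of_forall (s := Set.Iio lam) hbelow)

end PolyakLojasiewicz

theorem pl_implies_quadratic_growth_general
    (d : ℕ) (f : EuclideanSpace ℝ (Fin d) → ℝ) (fstar lam : ℝ)
    (hf : Differentiable ℝ f)
    (Ostar : Set (EuclideanSpace ℝ (Fin d)))
    (hO : Ostar = {θ | f θ = fstar})
    (hinf : ∀ θ, fstar ≤ f θ)
    (hPL : ∀ θ, 2 * lam * (f θ - fstar) ≤ ‖gradient f θ‖ ^ 2) :
    ∀ θ, lam * (Metric.infDist θ Ostar) ^ 2 ≤ 2 * (f θ - fstar) := by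
  subst hO
  exact mul_infDist_sq_le_of_polyakLojasiewicz hf hinf hPL

/-- PŁI (with Lipschitz gradient) implies the quadratic growth condition. -/
theorem pl_implies_quadratic_growth
    (d : ℕ) (f : EuclideanSpace ℝ (Fin d) → ℝ) (fstar lam L : ℝ)
    (hlam : 0 < lam) (hL : 0 < L)
    (hf : Differentiable ℝ f)
    (Ostar : Set (EuclideanSpace ℝ (Fin d)))
    (hO : Ostar = {θ | f θ = fstar}) (hOne : Ostar.Nonempty) (hOcl : IsClosed Ostar)
    (hinf : ∀ θ, fstar ≤ f θ)
    (hLip : ∀ x y, ‖gradient f x - gradient f y‖ ≤ L * ‖x - y‖)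
    (hPL : ∀ θ, 2 * lam * (f θ - fstar) ≤ ‖gradient f θ‖ ^ 2) :
    ∀ θ, lam * (Metric.infDist θ Ostar) ^ 2 ≤ 2 * (f θ - fstar) :=
  pl_implies_quadratic_growth_general d f fstar lam hf Ostar hO hinf hPL
end

section
/- Let F : M → ℝ ∪ {+∞} be lower semicontinuous on a complete metric space (M, d), with F_* := inf F, and let M_* := argmin F be nonempty and closed. Suppose (z_t)_{t≥0} ⊆ M satisfies, for all t' ≥ t ≥ 0, d(z_t, z_{t'}) ≤ √(2(F(z_t) − F_*)/λ) − √(2(F(z_{t'}) − F_*)/λ), and F(z_t) → F_* as t → ∞. Then (z_t) converges to some z_∞ ∈ M_*, and d(z_0, M_*) ≤ √(2(F(z_0) − F_*)/λ). -/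
open Filter Topology

/-!
The estimate makes `z` Cauchy with modulus `g t = √(2 (F (z t) - F_*) / λ)`, which tends to
`0` because the energy does; by completeness `z` has a limit, which lower semicontinuity places
in `M_*`. Letting `t' → ∞` in `d(z_0, z_{t'}) ≤ g 0` bounds the distance from `z_0` to that
minimizer.
-/

theorem cauchySeq_of_eventually_dist_le_of_tendsto_zero {ι α : Type*} [SemilatticeSup ι]
    [Nonempty ι] [PseudoMetricSpace α] {s : ι → α} (b : ι → ℝ)
    (h : ∀ᶠ n in atTop, ∀ m, n ≤ m → dist (s n) (s m) ≤ b n)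
    (h₀ : Tendsto b atTop (𝓝 0)) : CauchySeq s :=
  Metric.cauchySeq_iff'.2 fun ε hε =>
    (h.and (h₀.eventually (gt_mem_nhds hε))).exists.imp fun N hN n hn => by
      rw [dist_comm]
      exact (hN.1 n hn).trans_lt hN.2

theorem LowerSemicontinuousAt.le_of_tendsto {α β γ : Type*} [TopologicalSpace α]
    [LinearOrder γ] [DenselyOrdered γ] [TopologicalSpace γ] [OrderTopology γ]
    {f : α → γ} {x : α} (hf : LowerSemicontinuousAt f x) {l : Filter β} [l.NeBot]
    {z : β → α} {a : γ} (hz : Tendsto z l (𝓝 x))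
    (hfz : Tendsto (fun t => f (z t)) l (𝓝 a)) : f x ≤ a := by
  by_contra! hax
  obtain ⟨b, hab, hbx⟩ := exists_between hax
  obtain ⟨t, hbt, htb⟩ :=
    ((hz.eventually (hf b hbx)).and (hfz.eventually (Iio_mem_nhds hab))).exists
  exact (hbt.trans htb).false

theorem cauchy_curve_converges_to_minimizer_general
    {M : Type*} [MetricSpace M] [CompleteSpace M]
    (F : M → EReal) (Fstar lam : ℝ)
    (hlsc : LowerSemicontinuous F)
    (hFge : ∀ w, (Fstar : EReal) ≤ F w)
    (Mstar : Set M) (hMstar : Mstar = {w | F w = (Fstar : EReal)})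
    (z : ℝ → M)
    (hz : ∀ t t' : ℝ, 0 ≤ t → t ≤ t' →
      dist (z t) (z t') ≤ Real.sqrt (2 * ((F (z t)).toReal - Fstar) / lam)
        - Real.sqrt (2 * ((F (z t')).toReal - Fstar) / lam))
    (hconv : Tendsto (fun t => F (z t)) atTop (nhds (Fstar : EReal))) :
    (∃ zlim ∈ Mstar, Tendsto z atTop (nhds zlim)) ∧
      Metric.infDist (z 0) Mstar
        ≤ Real.sqrt (2 * ((F (z 0)).toReal - Fstar) / lam) := by
  set g : ℝ → ℝ := fun t => Real.sqrt (2 * ((F (z t)).toReal - Fstar) / lam)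
  have hdist : ∀ t t', 0 ≤ t → t ≤ t' → dist (z t) (z t') ≤ g t := fun t t' ht htt' =>
    (hz t t' ht htt').trans (sub_le_self _ (Real.sqrt_nonneg _))
  have hg : Tendsto g atTop (𝓝 0) := by
    have henergy : Tendsto (fun t => (F (z t)).toReal) atTop (𝓝 Fstar) :=
      (EReal.tendsto_toReal (by simp) (by simp)).comp hconv
    have hcont : Continuous fun u : ℝ => Real.sqrt (2 * (u - Fstar) / lam) := by fun_prop
    have hmodulus := hcont.tendsto Fstar
    simp only [sub_self, mul_zero, zero_div, Real.sqrt_zero] at hmodulus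
    exact hmodulus.comp henergy
  obtain ⟨zlim, hzlim⟩ := cauchySeq_tendsto_of_complete <|
    cauchySeq_of_eventually_dist_le_of_tendsto_zero g
      ((eventually_ge_atTop 0).mono fun t ht t' => hdist t t' ht) hg
  have hmin : zlim ∈ Mstar := hMstar ▸
    le_antisymm ((hlsc.lowerSemicontinuousAt zlim).le_of_tendsto hzlim hconv) (hFge zlim)
  have hz0 : dist (z 0) zlim ≤ g 0 :=
    le_of_tendsto (tendsto_const_nhds.dist hzlim) <|
      (eventually_ge_atTop 0).mono fun t ht => hdist 0 t le_rfl ht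
  exact ⟨⟨zlim, hmin, hzlim⟩, (Metric.infDist_le_dist_of_mem hmin).trans hz0⟩

/-- If a curve satisfies the Cauchy-type estimate coming from the extended
Talagrand argument and its energy converges to the infimum, then the curve
converges to a minimizer, and the distance to the optimal set is bounded. -/
theorem cauchy_curve_converges_to_minimizer
    {M : Type*} [MetricSpace M] [CompleteSpace M]
    (F : M → EReal) (Fstar lam : ℝ) (hlam : 0 < lam)
    (hlsc : LowerSemicontinuous F)
    (hFge : ∀ w, (Fstar : EReal) ≤ F w)
    (Mstar : Set M) (hMstar : Mstar = {w | F w = (Fstar : EReal)})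
    (hne : Mstar.Nonempty) (hcl : IsClosed Mstar)
    (z : ℝ → M)
    (hz : ∀ t t' : ℝ, 0 ≤ t → t ≤ t' →
      dist (z t) (z t') ≤ Real.sqrt (2 * ((F (z t)).toReal - Fstar) / lam)
        - Real.sqrt (2 * ((F (z t')).toReal - Fstar) / lam))
    (hconv : Tendsto (fun t => F (z t)) atTop (nhds (Fstar : EReal))) :
    (∃ zlim ∈ Mstar, Tendsto z atTop (nhds zlim)) ∧
      Metric.infDist (z 0) Mstar
        ≤ Real.sqrt (2 * ((F (z 0)).toReal - Fstar) / lam) :=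
  cauchy_curve_converges_to_minimizer_general F Fstar lam hlsc hFge Mstar hMstar z hz hconv
end

section
/- Let u : [0,∞) → ℝ be differentiable with u(t) ≥ u_* for all t, and suppose u'(t) = −I(t) where I(t) ≥ 0 satisfies the Łojasiewicz-type bound 2λ(u(t) − u_*) ≤ I(t) for all t > 0 with λ > 0. Then √(u(t) − u_*) is nonincreasing and I(t)/(2√(u(t) − u_*)) = −(d/dt)√(u(t) − u_*) wherever u(t) > u_*; moreover ∫_t^{t'} √(I(s)) ds ≤ √(2/λ)(√(u(t) − u_*) − √(u(t') − u_*)) for t' ≥ t. -/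
open Real Set MeasureTheory

/-!
Since `u' = -I ≤ 0`, `u` decreases, hence so does `g := √(u - u⋆)`, and `g' = -I / (2g)` where
`g > 0`. The Łojasiewicz bound `I ≥ 2λ g²` gives `√I ≤ √(2/λ) · I / (2g) = -√(2/λ) g'`, and the
integral bound is the fundamental theorem of calculus for the right derivative of `g`. Once `g`
vanishes it stays `0` and `u` has a minimum there, so `I = -u' = 0`; with `x / 0 = 0` both the
derivative formula and the pointwise bound survive at such points, and no case split at the first
zero of `g` is needed.
-/

theorem antitoneOn_Ici_of_deriv_nonpos {f : ℝ → ℝ} {a : ℝ} (hcont : ContinuousOn f (Ici a))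
    (hdiff : DifferentiableOn ℝ f (Ioi a)) (hf' : ∀ x ∈ Ioi a, deriv f x ≤ 0) :
    AntitoneOn f (Ici a) :=
  antitoneOn_of_deriv_nonpos (convex_Ici a) hcont (by rwa [interior_Ici])
    (by rwa [interior_Ici])

theorem sqrt_le_sqrt_two_div_mul_div {lam a y : ℝ} (hlam : 0 < lam) (ha : 0 < a)
    (h : 2 * lam * a ^ 2 ≤ y) : √y ≤ √(2 / lam) * (y / (2 * a)) := by
  have hy : 0 ≤ y := le_trans (by positivity) h
  have h2a : 2 * a ≤ √(2 / lam) * √y := by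
    rw [← sqrt_mul (by positivity), le_sqrt (by positivity) (by positivity), div_mul_eq_mul_div,
      le_div_iff₀ hlam]
    linarith
  rw [mul_div_assoc', le_div_iff₀ (by positivity)]
  calc √y * (2 * a) ≤ √y * (√(2 / lam) * √y) := by gcongr
    _ = √(2 / lam) * y := by rw [mul_left_comm, mul_self_sqrt hy]

section

variable {u I : ℝ → ℝ} {ustar lam x : ℝ}

/-- The value at a zero of `u - ustar` is the junk value `deriv u x / 0 = 0`, which is the right
derivative there because `u` stays equal to `ustar` afterwards. -/
theorem hasDerivWithinAt_sqrt_sub_Ioi (hu : DifferentiableAt ℝ u x)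
    (hanti : AntitoneOn u (Ici x)) (hge : ∀ t, x ≤ t → ustar ≤ u t) :
    HasDerivWithinAt (fun s => √(u s - ustar)) (deriv u x / (2 * √(u x - ustar))) (Ioi x) x := by
  rcases (hge x le_rfl).lt_or_eq with hpos | heq
  · exact ((hu.hasDerivAt.sub_const ustar).sqrt (sub_ne_zero.2 hpos.ne')).hasDerivWithinAt
  · have hconst : ∀ t ∈ Ioi x, √(u t - ustar) = √(u x - ustar) := fun t ht => by
      have hxt : x ≤ t := le_of_lt ht
      rw [le_antisymm (hanti self_mem_Ici hxt hxt) (heq ▸ hge t hxt)]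
    rw [← heq, sub_self, sqrt_zero, mul_zero, div_zero]
    exact (hasDerivWithinAt_const x _ _).congr hconst rfl

theorem sqrt_le_sqrt_two_div_mul_div_sqrt_sub (hlam : 0 < lam) (hx : 0 < x)
    (hge : ∀ t, 0 ≤ t → ustar ≤ u t) (hderiv : deriv u x = -I x)
    (hLoj : 2 * lam * (u x - ustar) ≤ I x) :
    √(I x) ≤ √(2 / lam) * (I x / (2 * √(u x - ustar))) := by
  rcases (hge x hx.le).lt_or_eq with hpos | heq
  · apply sqrt_le_sqrt_two_div_mul_div hlam (sqrt_pos.2 (sub_pos.2 hpos))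
    rwa [sq_sqrt (sub_pos.2 hpos).le]
  · have hmin : IsLocalMin u x :=
      Filter.mem_of_superset (Ici_mem_nhds hx) fun t ht => heq ▸ hge t ht
    have hI : I x = 0 := by linarith [hmin.deriv_eq_zero]
    simp [hI]

end

/-- Key computation in the Otto–Villani-type argument: de Bruijn's identity
`u' = −I` and the Łojasiewicz-type bound `2λ(u − u⋆) ≤ I` give monotonicity of
`√(u − u⋆)`, the derivative identity, and the integral bound. -/
theorem otto_villani_key_computation
    (u I : ℝ → ℝ) (ustar lam : ℝ) (hlam : 0 < lam)
    (hu : Differentiable ℝ u) (hge : ∀ t, 0 ≤ t → ustar ≤ u t)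
    (hI0 : ∀ t, 0 ≤ t → 0 ≤ I t)
    (hderiv : ∀ t, 0 ≤ t → deriv u t = -I t)
    (hLoj : ∀ t, 0 < t → 2 * lam * (u t - ustar) ≤ I t) :
    AntitoneOn (fun t => Real.sqrt (u t - ustar)) (Set.Ici 0) ∧
    (∀ t, 0 < t → ustar < u t →
      I t / (2 * Real.sqrt (u t - ustar))
        = -deriv (fun s => Real.sqrt (u s - ustar)) t) ∧
    ∀ t t', 0 ≤ t → t ≤ t' →
      (∫ s in t..t', Real.sqrt (I s)) ≤
        Real.sqrt (2 / lam) * (Real.sqrt (u t - ustar) - Real.sqrt (u t' - ustar)) := by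
  have hanti : AntitoneOn u (Ici 0) :=
    antitoneOn_Ici_of_deriv_nonpos hu.continuous.continuousOn hu.differentiableOn fun t ht => by
      linarith [hderiv t (le_of_lt ht), hI0 t (le_of_lt ht)]
  have hsqrt_anti : AntitoneOn (fun t => √(u t - ustar)) (Ici 0) :=
    (sqrt_monotone.comp fun _ _ h => sub_le_sub_right h ustar).comp_antitoneOn hanti
  refine ⟨hsqrt_anti, fun t ht hpos => ?_, fun t t' ht htt' => ?_⟩
  · rw [((hu t).hasDerivAt.sub_const ustar).sqrt (sub_ne_zero.2 hpos.ne') |>.deriv,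
      hderiv t ht.le, neg_div, neg_neg]
  by_cases hint : IntervalIntegrable (fun s => √(I s)) volume t t'
  · have hcont : ContinuousOn (fun s => -(√(2 / lam) * √(u s - ustar))) (Icc t t') :=
      (continuous_const.mul (hu.continuous.sub continuous_const).sqrt).neg.continuousOn
    have hbound := intervalIntegral.integral_le_sub_of_hasDeriv_right_of_le htt' hcont
      (g' := fun x => √(2 / lam) * (I x / (2 * √(u x - ustar))))
      (fun x hx => by
        have hx0 : 0 < x := ht.trans_lt hx.1
        have h := ((hasDerivWithinAt_sqrt_sub_Ioi (hu x)
          (hanti.mono (Ici_subset_Ici.2 hx0.le)) fun s hs => hge s (hx0.le.trans hs)).const_mul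
          √(2 / lam)).neg
        rwa [hderiv x hx0.le, neg_div, mul_neg, neg_neg] at h)
      ((intervalIntegrable_iff_integrableOn_Icc_of_le htt').1 hint)
      (fun x hx => have hx0 : 0 < x := ht.trans_lt hx.1
        sqrt_le_sqrt_two_div_mul_div_sqrt_sub hlam hx0 hge (hderiv x hx0.le) (hLoj x hx0))
    linarith
  · rw [intervalIntegral.integral_undef hint]
    exact mul_nonneg (sqrt_nonneg _) (sub_nonneg.2 (hsqrt_anti ht (ht.trans htt') htt'))
end
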